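/- Let G be a finite group with a Beauville structure {{x1,y1},{x2,y2}} such that o(x1)·o(y1)·o(x1y1) is coprime to o(x2)·o(y2)·o(x2y2), and suppose there is an automorphism φ of G inverting each of x1, y1, x2, y2. Then G × G is a strongly real Beauville group. -/

import Mathlib

/-- The set Σ(x,y): all conjugates of powers (1 ≤ i ≤ |G|) of x, y and xy. -/
def BSigma {G : Type*} [Group G] (x y : G) : Set G :=
  ⋃ i ∈ Finset.Icc 1 (Nat.card G), ⋃ g : G,
    ({g * x ^ i * g⁻¹, g * y ^ i * g⁻¹, g * (x * y) ^ i * g⁻¹} : Set G)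

/-- A finite group is a Beauville group if it admits an unmixed Beauville structure. -/
def IsBeauville (G : Type*) [Group G] : Prop :=
  ∃ x₁ y₁ x₂ y₂ : G,
    Subgroup.closure {x₁, y₁} = ⊤ ∧ Subgroup.closure {x₂, y₂} = ⊤ ∧
    BSigma x₁ y₁ ∩ BSigma x₂ y₂ = {1}

/-- A strongly real Beauville group: a Beauville structure together with an automorphism
φ and elements g₁, g₂ inverting the generators. -/
def IsStronglyRealBeauville (G : Type*) [Group G] : Prop :=
  ∃ x₁ y₁ x₂ y₂ : G,
    Subgroup.closure {x₁, y₁} = ⊤ ∧ Subgroup.closure {x₂, y₂} = ⊤ ∧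
    BSigma x₁ y₁ ∩ BSigma x₂ y₂ = {1} ∧
    ∃ (φ : G ≃* G) (g₁ g₂ : G),
      g₁ * φ x₁ * g₁⁻¹ = x₁⁻¹ ∧ g₁ * φ y₁ * g₁⁻¹ = y₁⁻¹ ∧
      g₂ * φ x₂ * g₂⁻¹ = x₂⁻¹ ∧ g₂ * φ y₂ * g₂⁻¹ = y₂⁻¹

section Aux

variable {G : Type*} [Group G] [Finite G]

lemma one_mem_BSigma (x y : G) : (1 : G) ∈ BSigma x y := by
  simp only [BSigma, Set.mem_iUnion, Finset.mem_Icc]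
  exact ⟨Nat.card G, ⟨Nat.card_pos, le_rfl⟩, 1, by simp [pow_card_eq_one']⟩

lemma conj_pow_mem (x y a g : G) (ha : a = x ∨ a = y ∨ a = x * y) (i : ℕ) :
    g * a ^ i * g⁻¹ = 1 ∨ g * a ^ i * g⁻¹ ∈ BSigma x y := by
  rcases Nat.eq_zero_or_pos (i % orderOf a) with h0 | hpos
  · left
    rw [← pow_mod_orderOf a i, h0]
    simp
  · right
    have hle : i % orderOf a ≤ Nat.card G :=
      le_trans (Nat.le_of_lt (Nat.mod_lt _ (orderOf_pos a)))
        (Nat.le_of_dvd Nat.card_pos (orderOf_dvd_natCard a))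
    rw [← pow_mod_orderOf a i]
    simp only [BSigma, Set.mem_iUnion, Finset.mem_Icc]
    refine ⟨i % orderOf a, ⟨hpos, hle⟩, g, ?_⟩
    rcases ha with rfl | rfl | rfl <;> simp

lemma conj_pow_eq_one (x₁ y₁ x₂ y₂ : G)
    (hSig : BSigma x₁ y₁ ∩ BSigma x₂ y₂ = {1})
    (a b g g' : G) (ha : a = x₁ ∨ a = y₁ ∨ a = x₁ * y₁)
    (hb : b = x₂ ∨ b = y₂ ∨ b = x₂ * y₂) (i j : ℕ)
    (h : g * a ^ i * g⁻¹ = g' * b ^ j * g'⁻¹) :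
    g * a ^ i * g⁻¹ = 1 := by
  rcases conj_pow_mem x₁ y₁ a g ha i with h1 | h1
  · exact h1
  rcases conj_pow_mem x₂ y₂ b g' hb j with h2 | h2
  · rw [h, h2]
  have : g * a ^ i * g⁻¹ ∈ BSigma x₁ y₁ ∩ BSigma x₂ y₂ := ⟨h1, h ▸ h2⟩
  rwa [hSig] at this

lemma exists_pow_pow_eq (a : G) (n : ℕ) (hco : Nat.Coprime n (orderOf a)) :
    ∃ k, (a ^ n) ^ k = a := by
  rcases Nat.lt_or_ge 1 (orderOf a) with h1 | h1
  · obtain ⟨m, -, hm⟩ := Nat.exists_mul_mod_eq_one_of_coprime hco.symm.symm h1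
    -- hm : n * m % orderOf a = 1
    refine ⟨m, ?_⟩
    rw [← pow_mul, ← pow_mod_orderOf, hm, pow_one]
  · have : orderOf a = 1 := le_antisymm h1 (orderOf_pos a)
    have ha : a = 1 := orderOf_eq_one_iff.mp this
    exact ⟨0, by simp [ha]⟩

lemma closure_pair_prod (a b c d : G)
    (hab : Subgroup.closure {a, b} = ⊤) (hcd : Subgroup.closure {c, d} = ⊤)
    (hac : Nat.Coprime (orderOf a) (orderOf c))
    (hbd : Nat.Coprime (orderOf b) (orderOf d)) :
    Subgroup.closure {((a, c) : G × G), (b, d)} = ⊤ := by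
  set H := Subgroup.closure {((a, c) : G × G), (b, d)} with hH
  have hacH : ((a, c) : G × G) ∈ H := Subgroup.subset_closure (by simp)
  have hbdH : ((b, d) : G × G) ∈ H := Subgroup.subset_closure (by simp)
  have key : ∀ (u v : G), ((u, v) : G × G) ∈ H → Nat.Coprime (orderOf u) (orderOf v) →
      ((u, 1) : G × G) ∈ H := by
    intro u v huv hco
    obtain ⟨k, hk⟩ := exists_pow_pow_eq u (orderOf v) hco.symm
    have := H.pow_mem huv (orderOf v * k)
    have heq : ((u, v) : G × G) ^ (orderOf v * k) = (u, 1) := by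
      rw [Prod.pow_mk, Prod.mk.injEq]
      constructor
      · rw [pow_mul]; exact hk
      · rw [pow_mul, pow_orderOf_eq_one, one_pow]
    rwa [heq] at this
  have haH : ((a, 1) : G × G) ∈ H := key a c hacH hac
  have hbH : ((b, 1) : G × G) ∈ H := key b d hbdH hbd
  have hcH : ((1, c) : G × G) ∈ H := by
    have := H.mul_mem (H.inv_mem haH) hacH
    simpa using this
  have hdH : ((1, d) : G × G) ∈ H := by
    have := H.mul_mem (H.inv_mem hbH) hbdH
    simpa using this
  have hleft : ∀ u : G, ((u, 1) : G × G) ∈ H := by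
    intro u
    have hu : u ∈ Subgroup.closure {a, b} := hab ▸ Subgroup.mem_top u
    induction hu using Subgroup.closure_induction with
    | mem z hz => rcases hz with rfl | rfl
                  · exact haH
                  · exact hbH
    | one => exact H.one_mem
    | mul z w _ _ hz hw => have := H.mul_mem hz hw; simpa using this
    | inv z _ hz => have := H.inv_mem hz; simpa using this
  have hright : ∀ v : G, ((1, v) : G × G) ∈ H := by
    intro v
    have hv : v ∈ Subgroup.closure {c, d} := hcd ▸ Subgroup.mem_top v
    induction hv using Subgroup.closure_induction with
    | mem z hz => rcases hz with rfl | rfl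
                  · exact hcH
                  · exact hdH
    | one => exact H.one_mem
    | mul z w _ _ hz hw => have := H.mul_mem hz hw; simpa using this
    | inv z _ hz => have := H.inv_mem hz; simpa using this
  rw [eq_top_iff]
  rintro ⟨u, v⟩ -
  have := H.mul_mem (hleft u) (hright v)
  simpa using this

omit [Finite G] in
/-- Extraction lemma: membership in BSigma of a pair gives conjugated powers coordinatewise. -/
lemma BSigma_prod_elim (x x' y y' u v : G)
    (h : ((u, v) : G × G) ∈ BSigma (x, x') (y, y')) :
    ∃ (i : ℕ) (g h' : G) (a a' : G),
      (a = x ∨ a = y ∨ a = x * y) ∧ (a' = x' ∨ a' = y' ∨ a' = x' * y') ∧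
      u = g * a ^ i * g⁻¹ ∧ v = h' * a' ^ i * h'⁻¹ := by
  simp only [BSigma, Set.mem_iUnion, Finset.mem_Icc, Set.mem_insert_iff,
    Set.mem_singleton_iff, Prod.exists] at h
  obtain ⟨i, -, g, h', hcase⟩ := h
  have hmul : ((x, x') : G × G) * (y, y') = (x * y, x' * y') := rfl
  rcases hcase with hc | hc | hc
  · rw [Prod.pow_mk] at hc
    exact ⟨i, g, h', x, x', Or.inl rfl, Or.inl rfl,
      congrArg Prod.fst hc, congrArg Prod.snd hc⟩
  · rw [Prod.pow_mk] at hc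
    exact ⟨i, g, h', y, y', Or.inr (Or.inl rfl), Or.inr (Or.inl rfl),
      congrArg Prod.fst hc, congrArg Prod.snd hc⟩
  · rw [hmul, Prod.pow_mk] at hc
    exact ⟨i, g, h', x * y, x' * y', Or.inr (Or.inr rfl), Or.inr (Or.inr rfl),
      congrArg Prod.fst hc, congrArg Prod.snd hc⟩

end Aux

/-- If G has a coprime Beauville structure whose four generators are all inverted by a single
automorphism φ, then G × G is a strongly real Beauville group. -/
theorem square_strongly_real (G : Type*) [Group G] [Finite G] (x₁ y₁ x₂ y₂ : G)
    (h₁ : Subgroup.closure {x₁, y₁} = ⊤) (h₂ : Subgroup.closure {x₂, y₂} = ⊤)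
    (hSig : BSigma x₁ y₁ ∩ BSigma x₂ y₂ = {1})
    (hco : Nat.Coprime (orderOf x₁ * orderOf y₁ * orderOf (x₁ * y₁))
                       (orderOf x₂ * orderOf y₂ * orderOf (x₂ * y₂)))
    (φ : G ≃* G)
    (hφx₁ : φ x₁ = x₁⁻¹) (hφy₁ : φ y₁ = y₁⁻¹)
    (hφx₂ : φ x₂ = x₂⁻¹) (hφy₂ : φ y₂ = y₂⁻¹) :
    IsStronglyRealBeauville (G × G) := by
  have hco12 : Nat.Coprime (orderOf x₁) (orderOf x₂) :=
    Nat.Coprime.coprime_dvd_right (Dvd.dvd.mul_right (dvd_mul_right _ _) _)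
      (Nat.Coprime.coprime_dvd_left (Dvd.dvd.mul_right (dvd_mul_right _ _) _) hco)
  have hcoy : Nat.Coprime (orderOf y₁) (orderOf y₂) :=
    Nat.Coprime.coprime_dvd_right (Dvd.dvd.mul_right (dvd_mul_left _ _) _)
      (Nat.Coprime.coprime_dvd_left (Dvd.dvd.mul_right (dvd_mul_left _ _) _) hco)
  refine ⟨(x₁, x₂), (y₁, y₂), (x₂, x₁), (y₂, y₁), ?_, ?_, ?_, ?_⟩
  · exact closure_pair_prod x₁ y₁ x₂ y₂ h₁ h₂ hco12 hcoy
  · exact closure_pair_prod x₂ y₂ x₁ y₁ h₂ h₁ hco12.symm hcoy.symm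
  · apply Set.eq_singleton_iff_unique_mem.mpr
    constructor
    · exact ⟨one_mem_BSigma _ _, one_mem_BSigma _ _⟩
    · rintro ⟨u, v⟩ ⟨hA, hB⟩
      obtain ⟨i, g, h', a, a', ha, ha', hu, hv⟩ := BSigma_prod_elim x₁ x₂ y₁ y₂ u v hA
      obtain ⟨j, g2, h2, b, b', hb, hb', hu2, hv2⟩ := BSigma_prod_elim x₂ x₁ y₂ y₁ u v hB
      have hSig' : BSigma x₂ y₂ ∩ BSigma x₁ y₁ = {1} := by
        rw [Set.inter_comm]; exact hSig
      have hu1 : u = 1 := by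
        rw [hu]
        exact conj_pow_eq_one x₁ y₁ x₂ y₂ hSig a b g g2 ha hb i j (hu ▸ hu2)
      have hv1 : v = 1 := by
        rw [hv]
        exact conj_pow_eq_one x₂ y₂ x₁ y₁ hSig' a' b' h' h2 ha' hb' i j (hv ▸ hv2)
      rw [Prod.mk.injEq]
      exact ⟨hu1, hv1⟩
  · refine ⟨MulEquiv.prodCongr φ φ, 1, 1, ?_, ?_, ?_, ?_⟩ <;>
      · show (1 : G × G) * _ * (1 : G × G)⁻¹ = _
        rw [one_mul, inv_one, mul_one]
        exact Prod.ext (by simp [MulEquiv.prodCongr, hφx₁, hφy₁, hφx₂, hφy₂])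
          (by simp [MulEquiv.prodCongr, hφx₁, hφy₁, hφx₂, hφy₂])
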